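/- The scalar curvature of the Siegel–Jacobi disk, s = Σ_{α,β} (h^{-1})_{β\bar{α}} Ric_{α\bar{β}}, is constant and equals -3/(2k) at every point. Explicitly, with metric matrix h = [[μ/P, μη/P],[μ\bar{η}/P, μ|η|²/P + 2k/P²]] and Ricci matrix Ric = [[0,0],[0, -3/P²]], one has trace(h^{-1} Ric) = -3/(2k). -/

import Mathlib

/-!
Since `Ric` has a single nonzero entry, `trace (h⁻¹ Ric) = h₀₀ Ric₁₁ / det h`, and with
`det h = 2kμ/P³` this is `(μ/P)(-3/P²) / (2kμ/P³) = -3/(2k)`; everything else cancels.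
-/

open Complex Matrix

/-- Holds without invertibility, since then both sides vanish (`A⁻¹ = 0` and `x / 0 = 0`). -/
theorem Matrix.trace_inv_mul_corner_fin_two {K : Type*} [Field K]
    (A : Matrix (Fin 2) (Fin 2) K) (e : K) :
    trace (A⁻¹ * !![0, 0; 0, e]) = A 0 0 * e / A.det := by
  rw [inv_def, Ring.inverse_eq_inv', smul_mul, trace_smul, adjugate_fin_two]
  simp only [trace_fin_two, mul_apply, Fin.sum_univ_two, of_apply, cons_val', cons_val_zero,
    cons_val_one, empty_val', cons_val_fin_one, smul_eq_mul]
  ring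

theorem Complex.one_sub_mul_conj_ne_zero {w : ℂ} (hw : ‖w‖ < 1) : 1 - w * starRingEnd ℂ w ≠ 0 := by
  rw [mul_conj, normSq_eq_norm_sq, sub_ne_zero]
  norm_cast
  nlinarith [norm_nonneg w]

section SiegelJacobi

variable {K : Type*} [Field K] (k μ P η ηb : K)

/-- The Siegel–Jacobi metric matrix `h`, with `P = 1 - w w̄`, `η` and `η̄` as free parameters. -/
def siegelJacobiMetric : Matrix (Fin 2) (Fin 2) K :=
  !![μ / P, μ * η / P; μ * ηb / P, μ * η * ηb / P + 2 * k / P ^ 2]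

theorem det_siegelJacobiMetric (hP : P ≠ 0) :
    (siegelJacobiMetric k μ P η ηb).det = 2 * k * μ / P ^ 3 := by
  rw [siegelJacobiMetric, det_fin_two_of]
  field_simp
  ring

theorem trace_inv_siegelJacobiMetric_mul_ricci (hk : k ≠ 0) (hμ : μ ≠ 0) (hP : P ≠ 0) :
    trace ((siegelJacobiMetric k μ P η ηb)⁻¹ * !![0, 0; 0, -3 / P ^ 2]) = -3 / (2 * k) := by
  rw [trace_inv_mul_corner_fin_two, det_siegelJacobiMetric _ _ _ _ _ hP, siegelJacobiMetric]
  simp only [of_apply, cons_val', cons_val_zero, empty_val', cons_val_fin_one]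
  field_simp

end SiegelJacobi

/-- The scalar curvature of the Siegel–Jacobi disk is constant:
`trace (h⁻¹ * Ric) = -3/(2k)`, where `h` is the metric matrix and `Ric` the Ricci
matrix. -/
theorem siegelJacobi_scalar_curvature (k μ : ℝ) (hk : 0 < k) (hμ : 0 < μ)
    (z w : ℂ) (hw : ‖w‖ < 1) :
    let P : ℂ := 1 - w * starRingEnd ℂ w
    let η : ℂ := (z + starRingEnd ℂ z * w) / P
    let ηb : ℂ := (starRingEnd ℂ z + z * starRingEnd ℂ w) / P
    let h : Matrix (Fin 2) (Fin 2) ℂ :=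
      !![(μ : ℂ) / P, (μ : ℂ) * η / P;
         (μ : ℂ) * ηb / P, (μ : ℂ) * η * ηb / P + 2 * (k : ℂ) / P ^ 2]
    let Ric : Matrix (Fin 2) (Fin 2) ℂ :=
      !![0, 0; 0, -3 / P ^ 2]
    Matrix.trace (h⁻¹ * Ric) = -3 / (2 * (k : ℂ)) :=
  trace_inv_siegelJacobiMetric_mul_ricci _ _ _ _ _ (ofReal_ne_zero.mpr hk.ne')
    (ofReal_ne_zero.mpr hμ.ne') (one_sub_mul_conj_ne_zero hw)
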